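/- Let (A^ℤ, F) be a cellular automaton and Σ a weakly-specified subshift. If there exist two bounded-variation curves h₁, h₂ with h₁ ≁ h₂ such that F is equicontinuous at every point of Σ along both h₁ and h₂, then F is Σ-nilpotent, i.e., the Σ-limit set Λ_Σ(F) = ⋂_n cl(⋃_{m≥n} F^m(Σ)) is finite; in fact there exists t₀ with F^{t₀}(Σ) finite. -/

import Mathlib

open Classical

section Prelude

variable {A : Type*}

/-- The shift map on configurations. -/
def shift (x : ℤ → A) : ℤ → A := fun i => x (i + 1)

/-- The cylinder of the word `u` placed at position `p`. -/
def cylAt (u : List A) (p : ℤ) : Set (ℤ → A) :=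
  {x | ∀ i : Fin u.length, x (p + ((i : ℕ) : ℤ)) = u.get i}

/-- The region of consequences of a set of configurations. -/
def consSet (F : (ℤ → A) → (ℤ → A)) (X : Set (ℤ → A)) : Set (ℤ × ℕ) :=
  {q | ∀ x ∈ X, ∀ y ∈ X, F^[q.2] x q.1 = F^[q.2] y q.1}

/-- `F` is a cellular automaton with neighborhood `⟦r,s⟧`. -/
def IsCA (F : (ℤ → A) → (ℤ → A)) (r s : ℤ) : Prop :=
  (∀ x, F (shift x) = shift (F x)) ∧
  (∀ x y : ℤ → A, (∀ i : ℤ, r ≤ i → i ≤ s → x i = y i) → F x 0 = F y 0)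

/-- A subshift: a closed shift-invariant set. -/
def IsSubshift [TopologicalSpace A] (S : Set (ℤ → A)) : Prop :=
  IsClosed S ∧ shift '' S = S

/-- Two configurations agree on the centered window of radius `m`
(Cantor distance `< 2^{-m}`). -/
def close (m : ℕ) (x y : ℤ → A) : Prop := ∀ i : ℤ, |i| ≤ (m : ℤ) → x i = y i

/-- `y` is in the tube of radius `2^{-k}` along `h` around `x`:
for every time `n` the configurations `σ^{h n} ∘ F^n (x)` and `σ^{h n} ∘ F^n (y)`
agree on the window of radius `k`. -/
def tube (F : (ℤ → A) → (ℤ → A)) (h : ℕ → ℤ) (k : ℕ) (x y : ℤ → A) : Prop :=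
  ∀ n : ℕ, ∀ i : ℤ, |i| ≤ (k : ℤ) → F^[n] x (i + h n) = F^[n] y (i + h n)

/-- `x` is an equicontinuous point along `h` relative to `S`. -/
def eqPt (F : (ℤ → A) → (ℤ → A)) (S : Set (ℤ → A)) (h : ℕ → ℤ) (x : ℤ → A) : Prop :=
  ∀ k : ℕ, ∃ m : ℕ, ∀ y ∈ S, close m x y → tube F h k x y

/-- `F` is sensitive along `h` relative to `S`. -/
def sensitive (F : (ℤ → A) → (ℤ → A)) (S : Set (ℤ → A)) (h : ℕ → ℤ) : Prop :=
  ∃ k : ℕ, ∀ m : ℕ, ∀ x ∈ S, ∃ y ∈ S, close m x y ∧ ¬ tube F h k x y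

/-- `F` is right-expansive along `h` relative to `S`. -/
def rightExpansive (F : (ℤ → A) → (ℤ → A)) (S : Set (ℤ → A)) (h : ℕ → ℤ) : Prop :=
  ∃ k : ℕ, ∀ x ∈ S, ∀ y ∈ S, (∃ i : ℤ, 0 ≤ i ∧ x i ≠ y i) →
    ∀ z ∈ S, ¬ (tube F h k x z ∧ tube F h k y z)

/-- `F` is left-expansive along `h` relative to `S`. -/
def leftExpansive (F : (ℤ → A) → (ℤ → A)) (S : Set (ℤ → A)) (h : ℕ → ℤ) : Prop :=
  ∃ k : ℕ, ∀ x ∈ S, ∀ y ∈ S, (∃ i : ℤ, i ≤ 0 ∧ x i ≠ y i) →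
    ∀ z ∈ S, ¬ (tube F h k x z ∧ tube F h k y z)

/-- Curves with bounded variation. -/
def BV (h : ℕ → ℤ) : Prop := ∃ M : ℤ, 0 < M ∧ ∀ n : ℕ, |h (n + 1) - h n| ≤ M

/-- The preorder `h ≾ k` on curves. -/
def precsim (h k : ℕ → ℤ) : Prop := ∃ M : ℤ, 0 < M ∧ ∀ n : ℕ, h n ≤ k n + M

/-- The equivalence `h ∼ k` on curves. -/
def simEq (h k : ℕ → ℤ) : Prop := ∃ M : ℤ, 0 < M ∧ ∀ n : ℕ, k n - M ≤ h n ∧ h n ≤ k n + M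

/-- The word `u` belongs to the language of `S`. -/
def inLang (S : Set (ℤ → A)) (u : List A) : Prop := ∃ x ∈ S, x ∈ cylAt u 0

/-- Transitivity of a subshift, expressed on its language. -/
def transitiveSubshift (S : Set (ℤ → A)) : Prop :=
  ∀ u v : List A, inLang S u → inLang S v → ∃ w : List A, inLang S (u ++ w ++ v)

/-- `u` is a blocking word along `h` for the CA `F` of neighborhood `⟦r,s⟧`,
relative to the subshift `S`. -/
def blockingWord (F : (ℤ → A) → (ℤ → A)) (S : Set (ℤ → A)) (h : ℕ → ℤ) (r s : ℤ)
    (u : List A) : Prop :=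
  inLang S u ∧
  ∃ e : ℕ, 0 < e ∧
    (∀ n : ℕ, |h (n + 1) - h n| + s < (e : ℤ) ∧ |h (n + 1) - h n| - r < (e : ℤ)) ∧
    (e : ℤ) ≤ u.length ∧
    ∃ p : ℤ, {q : ℤ × ℕ | h q.2 ≤ q.1 ∧ q.1 < h q.2 + (e : ℤ)} ⊆ consSet F (S ∩ cylAt u p)

end Prelude
/-- A `σ`-periodic configuration. -/
def isPeriodicConf {A : Type*} (x : ℤ → A) : Prop :=
  ∃ p : ℕ, 0 < p ∧ ∀ i : ℤ, x (i + (p : ℤ)) = x i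

/-- Weak specification of a subshift. -/
def weaklySpecified {A : Type*} (S : Set (ℤ → A)) : Prop :=
  ∃ N : ℕ, ∀ u v : List A, inLang S u → inLang S v →
    ∃ n ≤ N, ∃ x ∈ S, isPeriodicConf x ∧
      (∀ i : Fin u.length, x ((i : ℕ) : ℤ) = u.get i) ∧
      (∀ i : Fin v.length, x (((n + u.length + (i : ℕ) : ℕ) : ℤ)) = v.get i)

/-- The `Σ`-limit set of a cellular automaton. -/
def limitSet {A : Type*} [TopologicalSpace A] (F : (ℤ → A) → (ℤ → A))
    (S : Set (ℤ → A)) : Set (ℤ → A) :=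
  ⋂ n : ℕ, closure (⋃ m : ℕ, ⋃ _ : n ≤ m, F^[m] '' S)

/-!
Equicontinuity at every point of the compact set `Σ` is uniform, so along a bounded-variation
curve `h` the tube of radius `k` around `h` acts as a wall: two configurations of `Σ` that agree
near the origin and on a long interval on one side of the tube keep agreeing, at time `n`,
between the tube and a boundary that approaches it at the speed of the automaton.

Fix a `p`-periodic `y ∈ Σ` and let `x ∈ Σ` be arbitrary. Weak specification glues a `q ∈ Σ`
that follows `x` around the origin and a translate of `y` on a long block further right, at a
bounded distance. At a time `t` with `h₁ t - h₂ t` large, the `h₁`-tube shows that `Fᵗ x = Fᵗ q`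
on the window just left of `h₁ t`, while the `h₂`-tube (translated to the block) shows that
`Fᵗ q` is a translate of `Fᵗ y` on the same window. So `Fᵗ x` is `p`-periodic, and `Fᵗ(Σ)` lies in
the finite, closed, `F`-invariant set of `p`-periodic configurations, which therefore contains the
limit set.
-/

open Set Function

section Shift

variable {A : Type*}

def shiftBy (j : ℤ) (x : ℤ → A) : ℤ → A := fun i => x (i + j)

@[simp]
lemma shiftBy_apply (j : ℤ) (x : ℤ → A) (i : ℤ) : shiftBy j x i = x (i + j) := rfl

lemma shiftBy_shiftBy (a b : ℤ) (x : ℤ → A) : shiftBy a (shiftBy b x) = shiftBy (a + b) x := by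
  funext i
  simp [add_assoc]

@[simp]
lemma shiftBy_zero (x : ℤ → A) : shiftBy 0 x = x := by
  funext i
  simp

lemma shiftBy_one : shiftBy 1 = (shift : (ℤ → A) → ℤ → A) := rfl

lemma leftInverse_shiftBy_neg (j : ℤ) : LeftInverse (shiftBy (-j)) (shiftBy j : (ℤ → A) → _) :=
  fun x => by rw [shiftBy_shiftBy, neg_add_cancel, shiftBy_zero]

lemma rightInverse_shiftBy_neg (j : ℤ) : RightInverse (shiftBy (-j)) (shiftBy j : (ℤ → A) → _) :=
  fun x => by rw [shiftBy_shiftBy, add_neg_cancel, shiftBy_zero]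

lemma eqOn_shiftBy_Icc {x y : ℤ → A} {o a b : ℤ} :
    EqOn (shiftBy o x) (shiftBy o y) (Icc a b) ↔ EqOn x y (Icc (a + o) (b + o)) := by
  constructor
  · intro h i ⟨hi₁, hi₂⟩
    simpa using h (show i - o ∈ Icc a b from ⟨by omega, by omega⟩)
  · intro h i ⟨hi₁, hi₂⟩
    exact h ⟨by omega, by omega⟩

lemma shiftBy_mem {S : Set (ℤ → A)} (hS : shift '' S = S) {x : ℤ → A} (hx : x ∈ S) (j : ℤ) :
    shiftBy j x ∈ S := by
  induction j using Int.induction_on generalizing x with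
  | zero => simpa using hx
  | succ n ih =>
    rw [← shiftBy_shiftBy]
    exact ih (hS ▸ mem_image_of_mem shift hx)
  | pred n ih =>
    obtain ⟨y, hy, rfl⟩ := hS.symm ▸ hx
    rw [sub_eq_add_neg, ← shiftBy_shiftBy, ← shiftBy_one, leftInverse_shiftBy_neg]
    exact ih hy

end Shift

section CellularAutomaton

variable {A : Type*} {F : (ℤ → A) → ℤ → A} {r s : ℤ}

lemma IsCA.commute_shiftBy (hF : IsCA F r s) (j : ℤ) : Function.Commute F (shiftBy j) := by
  have hnat (n : ℕ) : Function.Commute F (shiftBy n) := by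
    induction n with
    | zero => exact fun x => by simp
    | succ n ih =>
      have : shiftBy ((n + 1 : ℕ) : ℤ) = (shiftBy n : (ℤ → A) → _) ∘ shift := by
        funext x
        simp [← shiftBy_one, shiftBy_shiftBy]
      rw [this]
      exact ih.comp_right hF.1
  obtain ⟨n, rfl | rfl⟩ := j.eq_nat_or_neg
  · exact hnat n
  · exact (hnat n).inverses_right (rightInverse_shiftBy_neg _) (leftInverse_shiftBy_neg _)

lemma IsCA.iterate_shiftBy (hF : IsCA F r s) (t : ℕ) (j : ℤ) (x : ℤ → A) :
    F^[t] (shiftBy j x) = shiftBy j (F^[t] x) :=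
  (hF.commute_shiftBy j).iterate_left t x

lemma IsCA.apply_eq_of_eqOn (hF : IsCA F r s) {x y : ℤ → A} {j : ℤ}
    (h : EqOn x y (Icc (j + r) (j + s))) : F x j = F y j := by
  have key := hF.2 (shiftBy j x) (shiftBy j y) fun i hi₁ hi₂ => h ⟨by omega, by omega⟩
  rwa [hF.commute_shiftBy j x, hF.commute_shiftBy j y, shiftBy_apply, shiftBy_apply,
    zero_add] at key

lemma IsCA.periodic_iterate (hF : IsCA F r s) {z : ℤ → A} {p : ℤ} (hz : Periodic z p) (t : ℕ) :
    Periodic (F^[t] z) p := fun i => by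
  have : shiftBy p z = z := funext hz
  rw [show F^[t] z (i + p) = shiftBy p (F^[t] z) i from rfl, ← hF.iterate_shiftBy, this]

end CellularAutomaton

lemma finite_setOf_periodic {A : Type*} [Finite A] {p : ℤ} (hp : 0 < p) :
    {z : ℤ → A | Periodic z p}.Finite := by
  refine Finite.of_finite_image (f := fun z (j : Fin p.toNat) => z j) (Set.toFinite _) ?_
  intro z hz z' hz' hzz'
  funext i
  have hmod : i % p = i - (i / p) • p := by rw [Int.emod_def, smul_eq_mul, mul_comm]
  have hlt : (i % p).toNat < p.toNat := by
    have := Int.emod_lt_of_pos i hp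
    omega
  have : z ((i % p).toNat : ℕ) = z' ((i % p).toNat : ℕ) := congrFun hzz' ⟨_, hlt⟩
  rwa [Int.toNat_of_nonneg (Int.emod_nonneg i hp.ne'), hmod, hz.sub_zsmul_eq,
    hz'.sub_zsmul_eq] at this

lemma limitSet_subset {A : Type*} [TopologicalSpace A] {F : (ℤ → A) → ℤ → A}
    {S C : Set (ℤ → A)} (hC : IsClosed C) (hFC : MapsTo F C C) {t : ℕ} (ht : F^[t] '' S ⊆ C) :
    limitSet F S ⊆ C := by
  refine (iInter_subset _ t).trans (closure_minimal (iUnion₂_subset fun m hm => ?_) hC)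
  rw [← Nat.sub_add_cancel hm, iterate_add, image_comp]
  exact (image_mono ht).trans (hFC.iterate _).image_subset

section Equicontinuity

variable {A : Type*} {F : (ℤ → A) → ℤ → A} {S : Set (ℤ → A)} {h : ℕ → ℤ}

lemma close_iff_eqOn {m : ℕ} {x y : ℤ → A} : close m x y ↔ EqOn x y (Icc (-m) m) := by
  simp only [close, EqOn, mem_Icc, abs_le]

lemma close.mono {m m' : ℕ} {x y : ℤ → A} (hxy : close m x y) (hm : m' ≤ m) : close m' x y :=
  fun i hi => hxy i (hi.trans (by exact_mod_cast hm))

lemma close_mem_nhds [TopologicalSpace A] [DiscreteTopology A] (m : ℕ) (x : ℤ → A) :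
    {y | close m x y} ∈ nhds x :=
  Filter.mem_of_superset (set_pi_mem_nhds (finite_Icc (-m : ℤ) m)
      fun i _ => mem_nhds_discrete.2 (mem_singleton (x i)))
    fun _ hy => close_iff_eqOn.2 fun i hi => (hy i hi).symm

lemma tube.eqOn {k : ℕ} {x y : ℤ → A} (ht : tube F h k x y) (n : ℕ) :
    EqOn (F^[n] x) (F^[n] y) (Icc (h n - k) (h n + k)) := fun i ⟨hi₁, hi₂⟩ => by
  simpa using ht n (i - h n) (abs_le.2 ⟨by omega, by omega⟩)

lemma tube.symm_trans {k : ℕ} {x y z : ℤ → A} (hy : tube F h k x y) (hz : tube F h k x z) :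
    tube F h k y z :=
  fun n i hi => (hy n i hi).symm.trans (hz n i hi)

def UniformEquicontinuousAlong (F : (ℤ → A) → ℤ → A) (S : Set (ℤ → A)) (h : ℕ → ℤ) : Prop :=
  ∀ k : ℕ, ∃ m : ℕ, ∀ x ∈ S, ∀ y ∈ S, close m x y → tube F h k x y

lemma IsCompact.uniformEquicontinuousAlong [TopologicalSpace A] [DiscreteTopology A]
    (hS : IsCompact S) (he : ∀ x ∈ S, eqPt F S h x) : UniformEquicontinuousAlong F S h := by
  intro k
  choose! μ hμ using fun x hx => he x hx k
  obtain ⟨T, hTS, hcover⟩ :=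
    hS.elim_nhds_subcover (fun x => {y | close (μ x) x y}) fun x _ => close_mem_nhds (μ x) x
  refine ⟨T.sup μ, fun y hy z hz hyz => ?_⟩
  obtain ⟨x, hxT, hxy⟩ := mem_iUnion₂.1 (hcover hy)
  have hμx : (μ x : ℤ) ≤ T.sup μ := by exact_mod_cast T.le_sup hxT
  have hxz : close (μ x) x z := fun i hi => (hxy i hi).trans (hyz i (hi.trans hμx))
  exact (hμ x (hTS x hxT) y hy hxy).symm_trans (hμ x (hTS x hxT) z hz hxz)

lemma UniformEquicontinuousAlong.eventually {h : ℕ → ℤ} (hu : UniformEquicontinuousAlong F S h)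
    (k : ℕ) : ∀ᶠ m in Filter.atTop, ∀ x ∈ S, ∀ y ∈ S, close m x y → tube F h k x y := by
  obtain ⟨m, hm⟩ := hu k
  exact Filter.eventually_atTop.2 ⟨m, fun m' hm' x hx y hy hxy => hm x hx y hy (hxy.mono hm')⟩

end Equicontinuity

section LightCone

variable {A : Type*} {F : (ℤ → A) → ℤ → A} {r s : ℤ} {h : ℕ → ℤ} {ρ M : ℤ} {k : ℕ}
  {x y : ℤ → A}

lemma tube.eqOn_iterate_right (ht : tube F h k x y) (hF : IsCA F r s) (hr : -ρ ≤ r)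
    (hs : s ≤ ρ) (hM : ∀ n, |h (n + 1) - h n| ≤ M) (hk : M + ρ ≤ k) {R : ℤ}
    (hag : EqOn x y (Icc (h 0 - k) R)) (n : ℕ) :
    EqOn (F^[n] x) (F^[n] y) (Icc (h n - k) (R - n * ρ)) := by
  induction n with
  | zero => simpa using hag
  | succ n ih =>
    intro i ⟨hi₁, hi₂⟩
    by_cases hin : i ≤ h (n + 1) + k
    · exact ht.eqOn (n + 1) ⟨hi₁, hin⟩
    · have hn : ((n + 1 : ℕ) : ℤ) * ρ = n * ρ + ρ := by push_cast; ring
      have := abs_le.1 (hM n)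
      rw [iterate_succ_apply', iterate_succ_apply']
      exact hF.apply_eq_of_eqOn fun j ⟨hj₁, hj₂⟩ => ih ⟨by omega, by omega⟩

lemma tube.eqOn_iterate_left (ht : tube F h k x y) (hF : IsCA F r s) (hr : -ρ ≤ r)
    (hs : s ≤ ρ) (hM : ∀ n, |h (n + 1) - h n| ≤ M) (hk : M + ρ ≤ k) {L : ℤ}
    (hag : EqOn x y (Icc L (h 0 + k))) (n : ℕ) :
    EqOn (F^[n] x) (F^[n] y) (Icc (L + n * ρ) (h n + k)) := by
  induction n with
  | zero => simpa using hag
  | succ n ih =>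
    intro i ⟨hi₁, hi₂⟩
    by_cases hin : h (n + 1) - k ≤ i
    · exact ht.eqOn (n + 1) ⟨hin, hi₂⟩
    · have hn : ((n + 1 : ℕ) : ℤ) * ρ = n * ρ + ρ := by push_cast; ring
      have := abs_le.1 (hM n)
      rw [iterate_succ_apply', iterate_succ_apply']
      exact hF.apply_eq_of_eqOn fun j ⟨hj₁, hj₂⟩ => ih ⟨by omega, by omega⟩

end LightCone

section Specification

variable {A : Type*} {S : Set (ℤ → A)}

lemma inLang_ofFn (hS : shift '' S = S) {x : ℤ → A} (hx : x ∈ S) (a : ℤ) (L : ℕ) :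
    inLang S (List.ofFn fun i : Fin L => x (a + i)) :=
  ⟨shiftBy a x, shiftBy_mem hS hx a, fun i => by simp [add_comm]⟩

lemma weaklySpecified.exists_periodic (hws : weaklySpecified S) (hne : S.Nonempty) :
    ∃ y ∈ S, ∃ p : ℤ, 0 < p ∧ Periodic y p := by
  obtain ⟨N, hN⟩ := hws
  obtain ⟨x, hx⟩ := hne
  have hnil : inLang S [] := ⟨x, hx, fun i => i.elim0⟩
  obtain ⟨-, -, y, hy, ⟨p, hp, hper⟩, -⟩ := hN [] [] hnil hnil
  exact ⟨y, hy, p, by omega, hper⟩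

def GluableWithin (S : Set (ℤ → A)) (N : ℕ) : Prop :=
  ∀ x ∈ S, ∀ y ∈ S, ∀ a b c : ℤ, a ≤ b → ∃ P : ℤ, b < P ∧ P ≤ b + 1 + N ∧
    ∃ q ∈ S, EqOn x q (Icc a b) ∧ EqOn (shiftBy (-P) y) q (Icc P (P + c))

lemma weaklySpecified.exists_gluableWithin (hws : weaklySpecified S) (hS : shift '' S = S) :
    ∃ N : ℕ, GluableWithin S N := by
  obtain ⟨N, hN⟩ := hws
  refine ⟨N, fun x hx y hy a b c hab => ?_⟩
  obtain ⟨n, hn, q, hq, -, hqx, hqy⟩ :=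
    hN _ _ (inLang_ofFn hS hx a (b - a + 1).toNat) (inLang_ofFn hS hy 0 (c + 1).toNat)
  refine ⟨b + 1 + n, by omega, by omega, shiftBy (-a) q, shiftBy_mem hS hq _, ?_, ?_⟩
  · intro i ⟨hi₁, hi₂⟩
    have := hqx ⟨(i - a).toNat, by simp; omega⟩
    simp only [List.get_ofFn, Fin.val_cast] at this
    rw [shiftBy_apply, ← sub_eq_add_neg, ← Int.toNat_of_nonneg (sub_nonneg.2 hi₁), this]
    congr 1
    omega
  · intro i ⟨hi₁, hi₂⟩
    have := hqy ⟨(i - (b + 1 + n)).toNat, by simp; omega⟩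
    simp only [List.get_ofFn, Fin.val_cast, List.length_ofFn] at this
    rw [shiftBy_apply, shiftBy_apply,
      show i + -a = ((n + (b - a + 1).toNat + (i - (b + 1 + n)).toNat : ℕ) : ℤ) by push_cast; omega,
      this]
    congr 1
    omega

end Specification

section Core

variable {A : Type*} {F : (ℤ → A) → ℤ → A} {r s : ℤ} {S : Set (ℤ → A)} {ρ : ℤ} {k m : ℕ}

lemma eqOn_iterate_left_of_close_tube (hF : IsCA F r s) (hr : -ρ ≤ r) (hs : s ≤ ρ) {h : ℕ → ℤ}
    {M : ℤ} (hM : ∀ n, |h (n + 1) - h n| ≤ M) (hk : M + ρ ≤ k)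
    (hu : ∀ x ∈ S, ∀ y ∈ S, close m x y → tube F h k x y) {x y : ℤ → A} (hx : x ∈ S)
    (hy : y ∈ S) {L C : ℤ} (hLm : L ≤ -m) (hCm : m ≤ C) (hCk : h 0 + k ≤ C)
    (hag : EqOn x y (Icc L C)) (n : ℕ) :
    EqOn (F^[n] x) (F^[n] y) (Icc (L + n * ρ) (h n + k)) :=
  (hu x hx y hy (close_iff_eqOn.2 (hag.mono (Icc_subset_Icc hLm hCm)))).eqOn_iterate_left
    hF hr hs hM hk (hag.mono (Icc_subset_Icc le_rfl hCk)) n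

lemma eqOn_iterate_right_of_close_tube (hF : IsCA F r s) (hS : shift '' S = S) (hr : -ρ ≤ r)
    (hs : s ≤ ρ) {h : ℕ → ℤ} {M : ℤ} (hM : ∀ n, |h (n + 1) - h n| ≤ M) (hk : M + ρ ≤ k)
    (hu : ∀ x ∈ S, ∀ y ∈ S, close m x y → tube F h k x y) {x y : ℤ → A} (hx : x ∈ S)
    (hy : y ∈ S) {o c R : ℤ} (hcm : m ≤ c) (hck : k - h 0 ≤ c) (hRm : m ≤ R)
    (hag : EqOn x y (Icc (o - c) (o + R))) (n : ℕ) :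
    EqOn (F^[n] x) (F^[n] y) (Icc (o + h n - k) (o + R - n * ρ)) := by
  have hag' : EqOn (shiftBy o x) (shiftBy o y) (Icc (-c) R) :=
    eqOn_shiftBy_Icc.2 (hag.mono (Icc_subset_Icc (by omega) (by omega)))
  have hclose : close m (shiftBy o x) (shiftBy o y) :=
    close_iff_eqOn.2 (hag'.mono (Icc_subset_Icc (by omega) hRm))
  have := (hu _ (shiftBy_mem hS hx o) _ (shiftBy_mem hS hy o) hclose).eqOn_iterate_right
    hF hr hs hM hk (hag'.mono (Icc_subset_Icc (by omega) le_rfl)) n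
  rw [hF.iterate_shiftBy, hF.iterate_shiftBy, eqOn_shiftBy_Icc] at this
  exact this.mono (Icc_subset_Icc (by omega) (by omega))

lemma exists_eqOn_shiftBy_iterate (hF : IsCA F r s) (hS : shift '' S = S) (hr : -ρ ≤ r)
    (hs : s ≤ ρ) {g₁ g₂ : ℕ → ℤ} {M₁ M₂ : ℤ} (hM₁ : ∀ n, |g₁ (n + 1) - g₁ n| ≤ M₁)
    (hM₂ : ∀ n, |g₂ (n + 1) - g₂ n| ≤ M₂) (hk₁ : M₁ + ρ ≤ k) (hk₂ : M₂ + ρ ≤ k)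
    (hu₁ : ∀ x ∈ S, ∀ y ∈ S, close m x y → tube F g₁ k x y)
    (hu₂ : ∀ x ∈ S, ∀ y ∈ S, close m x y → tube F g₂ k x y) {N : ℕ} (hglue : GluableWithin S N)
    {ℓ : ℤ} {t : ℕ} (ht : max (m : ℤ) (g₁ 0 + k) + max (m : ℤ) (k - g₂ 0) + N + ℓ + 1 ≤ g₁ t - g₂ t)
    {x y : ℤ → A} (hx : x ∈ S) (hy : y ∈ S) :
    ∃ P : ℤ, EqOn (F^[t] x) (shiftBy (-P) (F^[t] y)) (Icc (g₁ t + k - ℓ) (g₁ t + k)) := by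
  set b : ℤ := max m (g₁ 0 + k)
  set c : ℤ := max m (k - g₂ 0)
  set a : ℤ := min (-m) (g₁ t + k - ℓ - t * ρ)
  set c' : ℤ := max (g₁ t + k + t * ρ - b) (c + m)
  obtain ⟨P, hbP, hPN, q, hq, hxq, hyq⟩ := hglue x hx y hy a b c' (by omega)
  have h₁ := eqOn_iterate_left_of_close_tube hF hr hs hM₁ hk₁ hu₁ hx hq (min_le_left _ _)
    (le_max_left _ _) (le_max_right _ _) hxq t
  have h₂ := eqOn_iterate_right_of_close_tube hF hS hr hs hM₂ hk₂ hu₂ (shiftBy_mem hS hy (-P)) hq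
    (o := P + c) (R := c' - c) (le_max_left _ _) (le_max_right _ _) (by omega)
    (hyq.mono (Icc_subset_Icc (by omega) (by omega))) t
  refine ⟨P, fun i ⟨hi₁, hi₂⟩ => ?_⟩
  rw [← hF.iterate_shiftBy]
  exact (h₁ ⟨by omega, hi₂⟩).trans (h₂ ⟨by omega, by omega⟩).symm

lemma exists_iterate_periodic (hF : IsCA F r s) (hS : shift '' S = S) (hws : weaklySpecified S)
    {g₁ g₂ : ℕ → ℤ} (hb₁ : BV g₁) (hb₂ : BV g₂) (hdiff : ∀ B : ℤ, ∃ t, B ≤ g₁ t - g₂ t)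
    (hu₁ : UniformEquicontinuousAlong F S g₁) (hu₂ : UniformEquicontinuousAlong F S g₂) :
    ∃ t : ℕ, ∃ p : ℤ, 0 < p ∧ ∀ x ∈ S, Periodic (F^[t] x) p := by
  rcases S.eq_empty_or_nonempty with rfl | hne
  · exact ⟨0, 1, one_pos, by simp⟩
  obtain ⟨y, hy, p, hp, hyp⟩ := hws.exists_periodic hne
  obtain ⟨N, hglue⟩ := hws.exists_gluableWithin hS
  obtain ⟨M₁, hM₁pos, hM₁⟩ := hb₁
  obtain ⟨M₂, hM₂pos, hM₂⟩ := hb₂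
  set ρ := max (-r) s
  set k := (M₁ + M₂ + ρ).toNat
  have hk₁ : M₁ + ρ ≤ k := by linarith [Int.self_le_toNat (M₁ + M₂ + ρ)]
  have hk₂ : M₂ + ρ ≤ k := by linarith [Int.self_le_toNat (M₁ + M₂ + ρ)]
  obtain ⟨m, hm₁, hm₂⟩ := ((hu₁.eventually k).and (hu₂.eventually k)).exists
  obtain ⟨t, ht⟩ := hdiff (max (m : ℤ) (g₁ 0 + k) + max (m : ℤ) (k - g₂ 0) + N + p + 1)
  refine ⟨t, p, hp, fun x hx ξ => ?_⟩
  obtain ⟨P, hP⟩ := exists_eqOn_shiftBy_iterate hF hS (neg_le.2 (le_max_left _ _))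
    (le_max_right _ _) hM₁ hM₂ hk₁ hk₂ hm₁ hm₂ hglue ht (shiftBy_mem hS hx (ξ - (g₁ t + k - p))) hy
  have hleft := hP (left_mem_Icc.2 (by omega))
  have hright := hP (right_mem_Icc.2 (by omega))
  simp only [hF.iterate_shiftBy, shiftBy_apply, add_sub_cancel] at hleft hright
  rw [hleft, show ξ + p = g₁ t + k + (ξ - (g₁ t + k - p)) by ring, hright,
    show g₁ t + k + -P = g₁ t + k - p + -P + p by ring]
  exact hF.periodic_iterate hyp t _

end Core

lemma exists_le_sub_of_not_simEq {h₁ h₂ : ℕ → ℤ} (hns : ¬ simEq h₁ h₂) :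
    (∀ B : ℤ, ∃ t, B ≤ h₁ t - h₂ t) ∨ (∀ B : ℤ, ∃ t, B ≤ h₂ t - h₁ t) := by
  by_contra! ⟨⟨B₁, hB₁⟩, ⟨B₂, hB₂⟩⟩
  exact hns ⟨max (max B₁ B₂) 1, by omega,
    fun n => ⟨by have := hB₂ n; omega, by have := hB₁ n; omega⟩⟩

/-- full equicontinuity along two non-equivalent bounded-variation
curves on a weakly-specified subshift forces `Σ`-nilpotency. -/
theorem stmt11 {A : Type*} [Fintype A] [TopologicalSpace A] [DiscreteTopology A]
    (F : (ℤ → A) → (ℤ → A)) (r s : ℤ) (hF : IsCA F r s)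
    (S : Set (ℤ → A)) (hS : IsSubshift S) (hws : weaklySpecified S)
    (h₁ h₂ : ℕ → ℤ) (hb₁ : BV h₁) (hb₂ : BV h₂) (hns : ¬ simEq h₁ h₂)
    (he₁ : ∀ x ∈ S, eqPt F S h₁ x) (he₂ : ∀ x ∈ S, eqPt F S h₂ x) :
    (limitSet F S).Finite ∧ ∃ t₀ : ℕ, (F^[t₀] '' S).Finite := by
  have hu₁ := hS.1.isCompact.uniformEquicontinuousAlong he₁
  have hu₂ := hS.1.isCompact.uniformEquicontinuousAlong he₂
  obtain ⟨t, p, hp, hper⟩ : ∃ t : ℕ, ∃ p : ℤ, 0 < p ∧ ∀ x ∈ S, Periodic (F^[t] x) p := by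
    rcases exists_le_sub_of_not_simEq hns with hd | hd
    · exact exists_iterate_periodic hF hS.2 hws hb₁ hb₂ hd hu₁ hu₂
    · exact exists_iterate_periodic hF hS.2 hws hb₂ hb₁ hd hu₂ hu₁
  have hfin : {z : ℤ → A | Periodic z p}.Finite := finite_setOf_periodic hp
  have himg : F^[t] '' S ⊆ {z | Periodic z p} := image_subset_iff.2 hper
  have hmaps : MapsTo F {z | Periodic z p} {z | Periodic z p} :=
    fun z hz => hF.periodic_iterate hz 1
  exact ⟨hfin.subset (limitSet_subset hfin.isClosed hmaps himg), t, hfin.subset himg⟩
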